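/- arXiv:1309.0532 — 8 statements merged into one kernel-verified Lean document; each statement's English description precedes it below -/
import Mathlib

section
/- Let P be an idempotent operator on a finite-dimensional inner product space. Every nonzero eigenvalue λ of P*P satisfies λ ≥ 1. -/
theorem stmt_4 {𝕜 E : Type*} [RCLike 𝕜] [NormedAddCommGroup E]
    [InnerProductSpace 𝕜 E] [FiniteDimensional 𝕜 E]
    (P : E →ₗ[𝕜] E) (hP : P ∘ₗ P = P) (μ : ℝ) (hμ : μ ≠ 0)
    (h : Module.End.HasEigenvalue ((LinearMap.adjoint P) ∘ₗ P) ((μ : ℝ) : 𝕜)) :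
    1 ≤ μ := by
  obtain ⟨v, hv⟩ := h.exists_hasEigenvector
  have hv2 : v ≠ 0 := hv.2
  have hv1 : LinearMap.adjoint P (P v) = (μ : 𝕜) • v := hv.apply_eq_smul
  have key : ∀ x : E, ‖P x‖ ^ 2
      = RCLike.re (inner (𝕜 := 𝕜) x (LinearMap.adjoint P (P x))) := by
    intro x
    rw [LinearMap.adjoint_inner_right, inner_self_eq_norm_sq]
  have h1 : ‖P v‖ ^ 2 = μ * ‖v‖ ^ 2 := by
    have := key v
    rw [hv1, inner_smul_right] at this
    simpa [RCLike.mul_re, inner_self_eq_norm_sq] using this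
  have hPv : P v ≠ 0 := by
    intro h0
    rw [h0] at h1
    simp at h1
    rcases h1 with h1 | h1
    · exact hμ h1
    · exact hv2 h1
  have hnv : 0 < ‖v‖ := norm_pos_iff.mpr hv2
  have hnPv : 0 < ‖P v‖ := norm_pos_iff.mpr hPv
  have hμpos : 0 < μ := by
    have h2 : 0 < μ * ‖v‖ ^ 2 := h1 ▸ pow_pos hnPv 2
    nlinarith [pow_pos hnv 2]
  have hPP : P (P v) = P v := LinearMap.ext_iff.mp hP v
  have h3 : ‖P v‖ ^ 2 ≤ μ * (‖P v‖ * ‖v‖) := by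
    have := key (P v)
    rw [hPP, hv1, inner_smul_right] at this
    have hre : RCLike.re ((μ : 𝕜) * inner (𝕜 := 𝕜) (P v) v)
        = μ * RCLike.re (inner (𝕜 := 𝕜) (P v) v) := by
      simp [RCLike.mul_re]
    rw [hre] at this
    calc ‖P v‖ ^ 2 = μ * RCLike.re (inner (𝕜 := 𝕜) (P v) v) := this
      _ ≤ μ * (‖P v‖ * ‖v‖) := by
        apply mul_le_mul_of_nonneg_left _ hμpos.le
        exact re_inner_le_norm _ _
  have h4 : ‖P v‖ ≤ μ * ‖v‖ := by
    have h5 : ‖P v‖ * ‖P v‖ ≤ (μ * ‖v‖) * ‖P v‖ := by nlinarith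
    exact le_of_mul_le_mul_right h5 hnPv
  have h6 : ‖P v‖ * ‖P v‖ ≤ (μ * ‖v‖) * (μ * ‖v‖) :=
    mul_self_le_mul_self hnPv.le h4
  have h7 : μ * ‖v‖ ^ 2 ≤ μ ^ 2 * ‖v‖ ^ 2 := by nlinarith [h1, h6]
  have h8 : μ ≤ μ ^ 2 := le_of_mul_le_mul_right h7 (pow_pos hnv 2)
  nlinarith [h8, hμpos]
end

section
/- Let P be an idempotent operator on a finite-dimensional inner product space and x a unit eigenvector of P*P with eigenvalue 1. Then x ∈ im P ∩ (ker P)ᗮ. Conversely, every x ∈ im P ∩ (ker P)ᗮ satisfies P*P x = x. -/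
/-!
Since `P†` is again idempotent and `(ker P)ᗮ = range P†`, the space `(ker P)ᗮ` consists of the
fixed points of `P†`, just as `im P` consists of those of `P`. The converse is then immediate.
For the direct part, `x = P† (P x)` lies in `range P† = (ker P)ᗮ`, so `P† x = x`; hence
`P x - x` lies in `ker P† = (im P)ᗮ` and is orthogonal to `x` (being in `ker P`), so it is
orthogonal to itself.
-/

open LinearMap

namespace LinearMap

variable {𝕜 E : Type*} [RCLike 𝕜] [NormedAddCommGroup E] [InnerProductSpace 𝕜 E]
  [FiniteDimensional 𝕜 E] {P : E →ₗ[𝕜] E}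

theorem IsIdempotentElem.adjoint (hP : IsIdempotentElem P) : IsIdempotentElem P.adjoint := by
  simpa only [star_eq_adjoint] using hP.star

theorem IsIdempotentElem.mem_orthogonal_ker_iff (hP : IsIdempotentElem P) {x : E} :
    x ∈ (ker P)ᗮ ↔ P.adjoint x = x := by
  rw [orthogonal_ker, hP.adjoint.mem_range_iff]

theorem IsIdempotentElem.apply_eq_of_adjoint_apply_apply_eq (hP : IsIdempotentElem P) {x : E}
    (hx : P.adjoint (P x) = x) : P x = x := by
  have hx_perp : x ∈ (ker P)ᗮ := orthogonal_ker P ▸ ⟨P x, hx⟩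
  have hdiff_ker : P x - x ∈ ker P := by
    simp [mem_ker, ← Module.End.mul_apply, hP.eq]
  have hdiff_range_perp : P x - x ∈ (range P)ᗮ := by
    rw [orthogonal_range, mem_ker, map_sub, hx, hP.mem_orthogonal_ker_iff.mp hx_perp, sub_self]
  have h_self : inner 𝕜 (P x - x) (P x - x) = 0 := by
    rw [inner_sub_right, Submodule.inner_left_of_mem_orthogonal (mem_range_self P x)
      hdiff_range_perp, Submodule.inner_right_of_mem_orthogonal hdiff_ker hx_perp, sub_self]
  exact sub_eq_zero.mp (inner_self_eq_zero.mp h_self)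

end LinearMap

theorem stmt_5 {𝕜 E : Type*} [RCLike 𝕜] [NormedAddCommGroup E]
    [InnerProductSpace 𝕜 E] [FiniteDimensional 𝕜 E]
    (P : E →ₗ[𝕜] E) (hP : P ∘ₗ P = P) :
    (∀ x : E, ‖x‖ = 1 → ((LinearMap.adjoint P) ∘ₗ P) x = x →
      x ∈ LinearMap.range P ⊓ (LinearMap.ker P)ᗮ) ∧
    (∀ x : E, x ∈ LinearMap.range P ⊓ (LinearMap.ker P)ᗮ →
      ((LinearMap.adjoint P) ∘ₗ P) x = x) := by
  have hP : IsIdempotentElem P := hP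
  constructor
  · intro x _ hx
    have hPx : P x = x := hP.apply_eq_of_adjoint_apply_apply_eq hx
    refine ⟨hP.mem_range_iff.mpr hPx, hP.mem_orthogonal_ker_iff.mpr ?_⟩
    simpa only [comp_apply, hPx] using hx
  · rintro x ⟨hx_range, hx_perp⟩
    rw [comp_apply, hP.mem_range_iff.mp hx_range, hP.mem_orthogonal_ker_iff.mp hx_perp]
end

section
/- Let T be a positive semidefinite self-adjoint operator on an n-dimensional inner product space with rank k ≤ n/2 and all nonzero eigenvalues ≥ 1. Then there exists an idempotent operator P (P² = P) with P*P = T. -/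
/-!
Diagonalize `T` in an orthonormal eigenbasis `b` with eigenvalues `μ`, and let `S` be the set of
indices with `μ i ≠ 0`. The rank bound leaves at least as many null indices as nonzero ones, so
there is an injection `f : S ↪ Sᶜ`. The operator sending `b i` to `b i + √(μ i - 1) • b (f i)` for
`i ∈ S` and killing `b j` for `j ∉ S` is idempotent, because it kills every `b (f i)`, and the
vectors `P (b i)` are pairwise orthogonal with `‖P (b i)‖² = 1 + (μ i - 1) = μ i`, so `P* P = T`.
-/

open Module

namespace OrthonormalBasis

variable {𝕜 E ι : Type*} [RCLike 𝕜] [NormedAddCommGroup E] [InnerProductSpace 𝕜 E] [Fintype ι]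
  (b : OrthonormalBasis ι 𝕜 E) {S : ι → Prop} [DecidablePred S]
  (f : {i // S i} ↪ {i // ¬ S i}) (c : ι → ℝ)

/-- The projection onto the span of the `b i + c i • b (f i)`, `i ∈ S`, along the span of the
`b j`, `j ∉ S`. -/
noncomputable def obliqueProjection : E →ₗ[𝕜] E :=
  b.toBasis.constr 𝕜 fun i => if h : S i then b i + (c i : 𝕜) • b (f ⟨i, h⟩) else 0

theorem obliqueProjection_apply_of_pos {i : ι} (h : S i) :
    b.obliqueProjection f c (b i) = b i + (c i : 𝕜) • b (f ⟨i, h⟩) := by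
  rw [obliqueProjection, ← b.coe_toBasis, Basis.constr_basis, b.coe_toBasis, dif_pos h]

theorem obliqueProjection_apply_of_neg {i : ι} (h : ¬ S i) :
    b.obliqueProjection f c (b i) = 0 := by
  rw [obliqueProjection, ← b.coe_toBasis, Basis.constr_basis, dif_neg h]

theorem obliqueProjection_comp_self :
    b.obliqueProjection f c ∘ₗ b.obliqueProjection f c = b.obliqueProjection f c := by
  refine b.toBasis.ext fun i => ?_
  rw [LinearMap.comp_apply, b.coe_toBasis]
  by_cases h : S i
  · rw [obliqueProjection_apply_of_pos b f c h, map_add, map_smul,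
      obliqueProjection_apply_of_pos b f c h, obliqueProjection_apply_of_neg b f c (f ⟨i, h⟩).2,
      smul_zero, add_zero]
  · rw [obliqueProjection_apply_of_neg b f c h, map_zero]

theorem inner_obliqueProjection_obliqueProjection [DecidableEq ι] (i j : ι) :
    inner 𝕜 (b.obliqueProjection f c (b i)) (b.obliqueProjection f c (b j)) =
      ((if i = j ∧ S i then 1 + c i ^ 2 else 0 : ℝ) : 𝕜) := by
  have hb := orthonormal_iff_ite.mp b.orthonormal
  by_cases hi : S i
  · by_cases hj : S j
    · rw [obliqueProjection_apply_of_pos b f c hi, obliqueProjection_apply_of_pos b f c hj]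
      have hfi : (f ⟨i, hi⟩ : ι) ≠ j := fun h => (f ⟨i, hi⟩).2 (h ▸ hj)
      have hfj : i ≠ f ⟨j, hj⟩ := fun h => (f ⟨j, hj⟩).2 (h ▸ hi)
      have hff : (f ⟨i, hi⟩ : ι) = f ⟨j, hj⟩ ↔ i = j := by
        rw [Subtype.coe_inj, f.apply_eq_iff_eq, Subtype.mk.injEq]
      simp only [inner_add_left, inner_add_right, inner_smul_left, inner_smul_right, hb,
        RCLike.conj_ofReal, hfi, hfj, hff, if_false, mul_zero, add_zero]
      split_ifs with h <;> simp_all [sq]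
    · simp [obliqueProjection_apply_of_neg b f c hj, show ¬ (i = j ∧ S i) from
        fun h => hj (h.1 ▸ h.2)]
  · simp [obliqueProjection_apply_of_neg b f c hi, hi]

theorem adjoint_obliqueProjection_comp_obliqueProjection_apply [FiniteDimensional 𝕜 E]
    (j : ι) :
    (LinearMap.adjoint (b.obliqueProjection f c) ∘ₗ b.obliqueProjection f c) (b j) =
      ((if S j then 1 + c j ^ 2 else 0 : ℝ) : 𝕜) • b j := by
  classical
  refine InnerProductSpace.ext_inner_left_basis b.toBasis fun i => ?_
  rw [b.coe_toBasis, LinearMap.comp_apply, LinearMap.adjoint_inner_right,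
    inner_obliqueProjection_obliqueProjection, inner_smul_right,
    orthonormal_iff_ite.mp b.orthonormal]
  by_cases hij : i = j
  · subst hij; simp
  · simp [hij]

end OrthonormalBasis

theorem LinearMap.IsSymmetric.card_eigenvalues_ne_zero_le_finrank_range
    {𝕜 E : Type*} [RCLike 𝕜] [NormedAddCommGroup E] [InnerProductSpace 𝕜 E]
    [FiniteDimensional 𝕜 E] {T : E →ₗ[𝕜] E} (hT : T.IsSymmetric) {n : ℕ}
    (hn : finrank 𝕜 E = n) :
    Fintype.card {i // hT.eigenvalues hn i ≠ 0} ≤ finrank 𝕜 (LinearMap.range T) := by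
  set b := hT.eigenvectorBasis hn
  have hmem (i : {i // hT.eigenvalues hn i ≠ 0}) : b i ∈ LinearMap.range T :=
    ⟨(hT.eigenvalues hn i : 𝕜)⁻¹ • b i, by
      rw [map_smul, hT.apply_eigenvectorBasis, smul_smul,
        inv_mul_cancel₀ (RCLike.ofReal_ne_zero.mpr i.2), one_smul]⟩
  refine LinearIndependent.fintype_card_le_finrank (b := fun i => ⟨b i, hmem i⟩) ?_
  exact .of_comp (LinearMap.range T).subtype <|
    b.orthonormal.linearIndependent.comp _ Subtype.val_injective

theorem stmt_7_general {𝕜 E : Type*} [RCLike 𝕜] [NormedAddCommGroup E]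
    [InnerProductSpace 𝕜 E] [FiniteDimensional 𝕜 E]
    (T : E →ₗ[𝕜] E) (hsa : T.IsSymmetric)
    (hrank : 2 * Module.finrank 𝕜 (LinearMap.range T) ≤ Module.finrank 𝕜 E)
    (heig : ∀ μ : ℝ, μ ≠ 0 → Module.End.HasEigenvalue T ((μ : ℝ) : 𝕜) → 1 ≤ μ) :
    ∃ P : E →ₗ[𝕜] E, P ∘ₗ P = P ∧ (LinearMap.adjoint P) ∘ₗ P = T := by
  classical
  set n := finrank 𝕜 E
  have hn : finrank 𝕜 E = n := rfl
  set b := hsa.eigenvectorBasis hn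
  set μ := hsa.eigenvalues hn
  have hcard : Fintype.card {i // μ i ≠ 0} ≤ Fintype.card {i // ¬ μ i ≠ 0} := by
    have : Fintype.card {i // μ i ≠ 0} ≤ _ := hsa.card_eigenvalues_ne_zero_le_finrank_range hn
    rw [Fintype.card_subtype_compl (fun i => μ i ≠ 0), Fintype.card_fin]
    omega
  obtain ⟨f⟩ := Function.Embedding.nonempty_of_card_le hcard
  refine ⟨b.obliqueProjection f (fun i => √(μ i - 1)), b.obliqueProjection_comp_self f _,
    b.toBasis.ext fun j => ?_⟩
  rw [b.coe_toBasis, b.adjoint_obliqueProjection_comp_obliqueProjection_apply,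
    hsa.apply_eigenvectorBasis]
  congr 2
  split_ifs with hj
  · have := heig _ hj (hsa.hasEigenvalue_eigenvalues hn j)
    rw [Real.sq_sqrt (by linarith)]
    ring
  · exact (not_not.mp hj).symm

theorem stmt_7 {𝕜 E : Type*} [RCLike 𝕜] [NormedAddCommGroup E]
    [InnerProductSpace 𝕜 E] [FiniteDimensional 𝕜 E]
    (T : E →ₗ[𝕜] E) (hsa : T.IsSymmetric)
    (hpos : ∀ x : E, 0 ≤ RCLike.re (inner 𝕜 (T x) x : 𝕜))
    (hrank : 2 * Module.finrank 𝕜 (LinearMap.range T) ≤ Module.finrank 𝕜 E)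
    (heig : ∀ μ : ℝ, μ ≠ 0 → Module.End.HasEigenvalue T ((μ : ℝ) : 𝕜) → 1 ≤ μ) :
    ∃ P : E →ₗ[𝕜] E, P ∘ₗ P = P ∧ (LinearMap.adjoint P) ∘ₗ P = T :=
  stmt_7_general T hsa hrank heig
end

section
/- Let T be a nonzero positive semidefinite self-adjoint operator on an n-dimensional inner product space with rank ≤ n/2. Then there exist an idempotent P and a positive real v such that T = v² P*P. -/
/-!
Diagonalise `T` in an orthonormal eigenbasis `(b i)` with eigenvalues `μ i ≥ 0` and let `S` be
the set of indices with `μ i ≠ 0`. Since `rank T ≤ n / 2`, at least half of the eigenvalues vanish,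
so `S` injects into its complement by some `f`. The map `P` with `P (b i) = b i + c i • b (f i)`
for `i ∈ S` and `P (b j) = 0` for `j ∉ S` is idempotent (it kills every `b (f i)`), and because
the vectors `b i`, `b (f i)` are pairwise orthogonal, `P* P` is diagonal in `(b i)` with entries
`1 + ‖c i‖²` on `S` and `0` off `S`. With `m` the least nonzero eigenvalue and
`c i = √(μ i / m - 1)`, this gives `T = m • P* P`.
-/

open Finset Module
open scoped InnerProductSpace

namespace OrthonormalBasis

variable {𝕜 E ι : Type*} [RCLike 𝕜] [NormedAddCommGroup E] [InnerProductSpace 𝕜 E]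
  [Fintype ι] [DecidableEq ι] (b : OrthonormalBasis ι 𝕜 E) (S : Finset ι) (f : ι → ι) (c : ι → 𝕜)

noncomputable def obliqueProj : E →ₗ[𝕜] E :=
  b.toBasis.constr 𝕜 fun i => if i ∈ S then b i + c i • b (f i) else 0

theorem obliqueProj_apply (i : ι) :
    b.obliqueProj S f c (b i) = if i ∈ S then b i + c i • b (f i) else 0 := by
  simpa only [obliqueProj, OrthonormalBasis.coe_toBasis] using b.toBasis.constr_basis 𝕜 _ i

variable {S f}

theorem obliqueProj_comp_self (hfS : ∀ i ∈ S, f i ∉ S) :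
    b.obliqueProj S f c ∘ₗ b.obliqueProj S f c = b.obliqueProj S f c := by
  refine b.toBasis.ext fun i => ?_
  simp only [OrthonormalBasis.coe_toBasis, LinearMap.comp_apply, obliqueProj_apply]
  split_ifs with hi
  · simp [obliqueProj_apply, hi, hfS i hi]
  · simp

theorem inner_obliqueProj_apply_obliqueProj_apply (hfS : ∀ i ∈ S, f i ∉ S)
    (hf : Set.InjOn f S) (j i : ι) :
    ⟪b.obliqueProj S f c (b j), b.obliqueProj S f c (b i)⟫_𝕜 =
      if j = i ∧ i ∈ S then ((1 + ‖c i‖ ^ 2 : ℝ) : 𝕜) else 0 := by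
  simp only [obliqueProj_apply]
  by_cases hi : i ∈ S
  · by_cases hj : j ∈ S
    · have hji : j ≠ f i := fun h => hfS i hi (h ▸ hj)
      have hij : f j ≠ i := fun h => hfS j hj (h ▸ hi)
      simp only [if_pos hi, if_pos hj, inner_add_left, inner_add_right, inner_smul_left,
        inner_smul_right, b.inner_eq_ite, if_neg hji, if_neg hij, hf.eq_iff hj hi]
      by_cases h : j = i
      · subst h
        simp [hi, RCLike.mul_conj]
      · simp [h]
    · have h : j ≠ i := fun h => hj (h ▸ hi)
      simp [hi, hj, h]
  · simp [hi]

variable [FiniteDimensional 𝕜 E]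

theorem adjoint_obliqueProj_comp_obliqueProj_apply (hfS : ∀ i ∈ S, f i ∉ S)
    (hf : Set.InjOn f S) (i : ι) :
    (LinearMap.adjoint (b.obliqueProj S f c) ∘ₗ b.obliqueProj S f c) (b i) =
      if i ∈ S then ((1 + ‖c i‖ ^ 2 : ℝ) : 𝕜) • b i else 0 := by
  refine InnerProductSpace.ext_inner_left_basis b.toBasis fun j => ?_
  rw [OrthonormalBasis.coe_toBasis, LinearMap.comp_apply, LinearMap.adjoint_inner_right,
    inner_obliqueProj_apply_obliqueProj_apply b c hfS hf]
  split_ifs <;> simp_all [inner_smul_right, b.inner_eq_ite]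

theorem eq_smul_adjoint_obliqueProj_comp_obliqueProj (hfS : ∀ i ∈ S, f i ∉ S)
    (hf : Set.InjOn f S) {T : E →ₗ[𝕜] E} {μ : ι → ℝ} (hb : ∀ i, T (b i) = (μ i : 𝕜) • b i)
    (hμS : ∀ i ∉ S, μ i = 0) {m : ℝ} (hμ : ∀ i ∈ S, m * (1 + ‖c i‖ ^ 2) = μ i) :
    T = (m : 𝕜) • (LinearMap.adjoint (b.obliqueProj S f c) ∘ₗ b.obliqueProj S f c) := by
  refine b.toBasis.ext fun i => ?_
  rw [OrthonormalBasis.coe_toBasis, LinearMap.smul_apply,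
    b.adjoint_obliqueProj_comp_obliqueProj_apply c hfS hf, hb]
  split_ifs with hi
  · rw [smul_smul, ← RCLike.ofReal_mul, hμ i hi]
  · simp [hμS i hi]

end OrthonormalBasis

theorem Finset.exists_injOn_of_card_le_card_compl {ι : Type*} [Fintype ι] [DecidableEq ι]
    {S : Finset ι} (h : #S ≤ #Sᶜ) : ∃ f : ι → ι, (∀ i ∈ S, f i ∉ S) ∧ Set.InjOn f S := by
  cases isEmpty_or_nonempty ι
  · exact ⟨id, isEmptyElim, fun i => isEmptyElim i⟩
  · obtain ⟨f, hmaps, hinj⟩ := (S : Set ι).toFinite.exists_injOn_of_encard_le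
      (t := ((Sᶜ : Finset ι) : Set ι))
      (by simp only [Set.encard_coe_eq_coe_finsetCard]; exact_mod_cast h)
    exact ⟨f, fun i hi => by simpa using hmaps hi, hinj⟩

namespace LinearMap.IsSymmetric

variable {𝕜 E : Type*} [RCLike 𝕜] [NormedAddCommGroup E] [InnerProductSpace 𝕜 E]
  [FiniteDimensional 𝕜 E] {T : E →ₗ[𝕜] E} {n : ℕ}

theorem card_eigenvalues_eq_zero (hT : T.IsSymmetric) (hn : finrank 𝕜 E = n) :
    #{i | hT.eigenvalues hn i = 0} = finrank 𝕜 (LinearMap.ker T) := by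
  rw [← End.eigenspace_zero, ← hT.card_filter_eigenvalues_eq hn]
  simp

theorem card_eigenvalues_ne_zero (hT : T.IsSymmetric) (hn : finrank 𝕜 E = n) :
    #{i | hT.eigenvalues hn i ≠ 0} = finrank 𝕜 (LinearMap.range T) := by
  rw [filter_not, card_sdiff_of_subset (filter_subset _ _),
    card_eigenvalues_eq_zero, card_univ, Fintype.card_fin, ← hn,
    ← T.finrank_range_add_finrank_ker, Nat.add_sub_cancel]

end LinearMap.IsSymmetric

theorem stmt_8 {𝕜 E : Type*} [RCLike 𝕜] [NormedAddCommGroup E]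
    [InnerProductSpace 𝕜 E] [FiniteDimensional 𝕜 E]
    (T : E →ₗ[𝕜] E) (hT : T ≠ 0) (hsa : T.IsSymmetric)
    (hpos : ∀ x : E, 0 ≤ RCLike.re (inner 𝕜 (T x) x : 𝕜))
    (hrank : 2 * Module.finrank 𝕜 (LinearMap.range T) ≤ Module.finrank 𝕜 E) :
    ∃ (P : E →ₗ[𝕜] E) (v : ℝ), 0 < v ∧ P ∘ₗ P = P ∧
      T = ((v ^ 2 : ℝ) : 𝕜) • ((LinearMap.adjoint P) ∘ₗ P) := by
  set b := hsa.eigenvectorBasis rfl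
  set μ := hsa.eigenvalues rfl
  set S : Finset (Fin (finrank 𝕜 E)) := {i | μ i ≠ 0}
  have hS_card : #S = finrank 𝕜 (LinearMap.range T) := hsa.card_eigenvalues_ne_zero rfl
  have hS : S.Nonempty := card_pos.mp <| hS_card ▸ Nat.pos_of_ne_zero
    (by rwa [Ne, Submodule.finrank_eq_zero, LinearMap.range_eq_bot])
  obtain ⟨f, hfS, hf⟩ := Finset.exists_injOn_of_card_le_card_compl (S := S) <| by
    have := S.card_add_card_compl
    rw [Fintype.card_fin] at this
    omega
  set m := S.inf' hS μ
  have hm : 0 < m := (lt_inf'_iff hS).2 fun i hi =>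
    (LinearMap.IsPositive.nonneg_eigenvalues ⟨hsa, hpos⟩ rfl i).lt_of_ne' (by simpa [S] using hi)
  set c : Fin (finrank 𝕜 E) → 𝕜 := fun i => ((√(μ i / m - 1) : ℝ) : 𝕜)
  have hμ : ∀ i ∈ S, m * (1 + ‖c i‖ ^ 2) = μ i := fun i hi => by
    have : 1 ≤ μ i / m := (one_le_div hm).2 (S.inf'_le μ hi)
    rw [RCLike.norm_ofReal, sq_abs, Real.sq_sqrt (by linarith)]
    field_simp
    ring
  refine ⟨b.obliqueProj S f c, √m, Real.sqrt_pos.2 hm, b.obliqueProj_comp_self c hfS, ?_⟩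
  rw [Real.sq_sqrt hm.le]
  exact b.eq_smul_adjoint_obliqueProj_comp_obliqueProj c hfS hf (hsa.apply_eigenvectorBasis rfl)
    (fun i hi => by simpa [S] using hi) hμ
end

section
/- Let T be a positive semidefinite self-adjoint operator on an n-dimensional inner product space with n even, rank T > n/2, and all nonzero eigenvalues ≥ 1. Then there exist two idempotents P₁, P₂ with T = P₁*P₁ + P₂*P₂. -/
open scoped ComplexConjugate

namespace Stmt10Aux

variable {𝕜 E : Type*} [RCLike 𝕜] [NormedAddCommGroup E] [InnerProductSpace 𝕜 E]

local notation "⟪" x ", " y "⟫" => @inner 𝕜 _ _ x y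

noncomputable def ro (x y : E) : E →ₗ[𝕜] E where
  toFun z := ⟪y, z⟫ • x
  map_add' a b := by rw [inner_add_right, add_smul]
  map_smul' c a := by rw [inner_smul_right, smul_smul]; rfl

@[simp] lemma ro_apply (x y z : E) : ro (𝕜 := 𝕜) x y z = ⟪y, z⟫ • x := rfl

lemma ro_comp (x y u v : E) : (ro x y) ∘ₗ (ro (𝕜 := 𝕜) u v) = ⟪y, u⟫ • ro x v := by
  ext z
  simp [inner_smul_right, smul_smul, mul_comm]

lemma ro_adjoint [FiniteDimensional 𝕜 E] (x y : E) :
    LinearMap.adjoint (ro (𝕜 := 𝕜) x y) = ro y x := by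
  rw [eq_comm, LinearMap.eq_adjoint_iff]
  intro u v
  simp [inner_smul_left, inner_smul_right, mul_comm]


variable {ι : Type*} [Fintype ι] [DecidableEq ι]

lemma sum_comp' {α : Type*} (s : Finset α) (f : α → (E →ₗ[𝕜] E)) (g : E →ₗ[𝕜] E) :
    (∑ i ∈ s, f i) ∘ₗ g = ∑ i ∈ s, (f i ∘ₗ g) := by
  ext x; simp [LinearMap.sum_apply]

lemma comp_sum' {α : Type*} (s : Finset α) (f : α → (E →ₗ[𝕜] E)) (g : E →ₗ[𝕜] E) :
    g ∘ₗ (∑ i ∈ s, f i) = ∑ i ∈ s, (g ∘ₗ f i) := by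
  ext x; simp [LinearMap.sum_apply]

noncomputable def op (v : ι → E) (M : ι → ι → ℝ) : E →ₗ[𝕜] E :=
  ∑ i, ∑ j, ((M i j : 𝕜)) • ro (v i) (v j)

lemma op_comp (v : ι → E) (hv : Orthonormal 𝕜 v) (M N : ι → ι → ℝ) :
    op (𝕜 := 𝕜) v M ∘ₗ op v N = op v (fun i j => ∑ k, M i k * N k j) := by
  unfold op
  simp only [sum_comp', comp_sum', LinearMap.smul_comp,
    LinearMap.comp_smul, ro_comp, orthonormal_iff_ite.mp hv]
  simp only [ite_smul, one_smul, zero_smul, Finset.sum_ite_eq', Finset.mem_univ, if_true,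
    Finset.smul_sum, smul_smul]
  push_cast [Finset.sum_smul]
  simp only [smul_ite, smul_zero, Finset.sum_ite_eq', Finset.mem_univ, if_true]
  conv_lhs => rw [Finset.sum_comm]
  conv_lhs => enter [2, l]; rw [Finset.sum_comm]
  conv_lhs => rw [Finset.sum_comm]
  exact Finset.sum_congr rfl fun i _ => Finset.sum_congr rfl fun l _ =>
    Finset.sum_congr rfl fun k _ => by rw [mul_comm]

lemma op_adjoint [FiniteDimensional 𝕜 E] (v : ι → E) (M : ι → ι → ℝ) :
    LinearMap.adjoint (op (𝕜 := 𝕜) v M) = op v (fun i j => M j i) := by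
  unfold op
  rw [map_sum]
  simp only [map_sum, map_smulₛₗ, ro_adjoint, RCLike.conj_ofReal]
  rw [Finset.sum_comm]

lemma op_add (v : ι → E) (M N : ι → ι → ℝ) :
    op (𝕜 := 𝕜) v M + op v N = op v (fun i j => M i j + N i j) := by
  unfold op
  rw [← Finset.sum_add_distrib]
  refine Finset.sum_congr rfl fun i _ => ?_
  rw [← Finset.sum_add_distrib]
  refine Finset.sum_congr rfl fun j _ => ?_
  rw [← add_smul]
  push_cast
  rfl


/-! ### 2x2 block algebra -/

def mul2 (M N : Bool → Bool → ℝ) : Bool → Bool → ℝ :=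
  fun s t => M s false * N false t + M s true * N true t

def tr2 (M : Bool → Bool → ℝ) : Bool → Bool → ℝ := fun s t => M t s

def diag2 (a b : ℝ) : Bool → Bool → ℝ := fun s t =>
  match s, t with
  | false, false => a
  | true, true => b
  | _, _ => 0

/-- `[[1, t'],[0,0]]` -/
def Amat (t' : ℝ) : Bool → Bool → ℝ := fun s t =>
  match s, t with
  | false, false => 1
  | false, true => t'
  | _, _ => 0

/-- `[[1, 0],[r,0]]` -/
def Azmat (r : ℝ) : Bool → Bool → ℝ := fun s t =>
  match s, t with
  | false, false => 1
  | true, false => r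
  | _, _ => 0

def Bmat (p q d : ℝ) : Bool → Bool → ℝ := fun s t =>
  match s, t with
  | false, false => (p + d * q) * p
  | false, true => -((p + d * q) * q)
  | true, false => (d * p - q) * p
  | true, true => -((d * p - q) * q)

lemma Amat_idem (t' : ℝ) : mul2 (Amat t') (Amat t') = Amat t' := by
  funext s t; cases s <;> cases t <;> simp [mul2, Amat]

lemma Azmat_idem (r : ℝ) : mul2 (Azmat r) (Azmat r) = Azmat r := by
  funext s t; cases s <;> cases t <;> simp [mul2, Azmat]

lemma Bmat_idem (p q d : ℝ) (h1 : p ^ 2 + q ^ 2 = 1) :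
    mul2 (Bmat p q d) (Bmat p q d) = Bmat p q d := by
  funext s t
  cases s <;> cases t <;> simp only [mul2, Bmat]
  · linear_combination ((p + d * q) * p) * h1
  · linear_combination (-((p + d * q) * q)) * h1
  · linear_combination ((d * p - q) * p) * h1
  · linear_combination (-((d * p - q) * q)) * h1

lemma Az_sum (l r : ℝ) (hr : r ^ 2 = l - 1) :
    (fun s t => mul2 (tr2 (Azmat r)) (Azmat r) s t + mul2 (tr2 (0 : Bool → Bool → ℝ)) 0 s t)
      = diag2 l 0 := by
  funext s t
  cases s <;> cases t <;>
    simp only [mul2, tr2, Azmat, diag2, Pi.zero_apply] <;>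
    first
    | linear_combination hr
    | ring

lemma AB_sum (l u t' c p q d : ℝ) (h1 : p ^ 2 + q ^ 2 = 1) (hd : d ^ 2 = c - 1)
    (hp2 : c * p ^ 2 = l - 1) (hq2 : c * q ^ 2 = u / l) (hpq : c * (p * q) = t')
    (ht2 : t' ^ 2 = (l - 1) * (u / l)) (hful : (l - 1) * (u / l) + u / l = u) :
    (fun s t => mul2 (tr2 (Amat t')) (Amat t') s t + mul2 (tr2 (Bmat p q d)) (Bmat p q d) s t)
      = diag2 l u := by
  funext s t
  cases s <;> cases t <;> simp only [mul2, tr2, Amat, Bmat, diag2]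
  · linear_combination (p ^ 2 * (1 + d ^ 2)) * h1 + p ^ 2 * hd + hp2
  · linear_combination (-(p * q) * (1 + d ^ 2)) * h1 + (-(p * q)) * hd + (-1 : ℝ) * hpq
  · linear_combination (-(p * q) * (1 + d ^ 2)) * h1 + (-(p * q)) * hd + (-1 : ℝ) * hpq
  · linear_combination (q ^ 2 * (1 + d ^ 2)) * h1 + q ^ 2 * hd + hq2 + ht2 + hful


lemma op_diagonal (v : ι → E) (f : ι → ℝ) (M : ι → ι → ℝ)
    (hM : ∀ i j, M i j = if i = j then f i else 0) :
    op (𝕜 := 𝕜) v M = ∑ i, ((f i : 𝕜)) • ro (v i) (v i) := by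
  unfold op
  refine Finset.sum_congr rfl fun i _ => ?_
  simp only [hM]
  simp only [apply_ite (fun r : ℝ => ((r : 𝕜))), RCLike.ofReal_zero, ite_smul, zero_smul]
  rw [Finset.sum_ite_eq, if_pos (Finset.mem_univ i)]

/-! ### block diagonal matrices -/

variable {κ : Type*} [Fintype κ] [DecidableEq κ]

def bd (A : κ → Bool → Bool → ℝ) : (κ × Bool) → (κ × Bool) → ℝ := fun i j =>
  if i.1 = j.1 then A i.1 i.2 j.2 else 0

lemma bd_mul (A B : κ → Bool → Bool → ℝ) :
    (fun i j => ∑ k : κ × Bool, bd A i k * bd B k j) = bd (fun p => mul2 (A p) (B p)) := by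
  funext i j
  obtain ⟨pi, si⟩ := i
  obtain ⟨pj, sj⟩ := j
  simp only [bd, Fintype.sum_prod_type]
  rw [Finset.sum_eq_single pi]
  · by_cases h : pi = pj
    · subst h
      simp [mul2, Fintype.sum_bool, add_comm]
    · simp [h]
  · intro p _ hp
    simp [Ne.symm hp]
  · intro h
    exact absurd (Finset.mem_univ pi) h

lemma bd_tr (A : κ → Bool → Bool → ℝ) :
    (fun i j => bd A j i) = bd (fun p => tr2 (A p)) := by
  funext i j
  rcases eq_or_ne i.1 j.1 with h | h
  · simp [bd, tr2, h]
  · simp [bd, h, h.symm]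

lemma bd_add (A B : κ → Bool → Bool → ℝ) :
    (fun i j => bd A i j + bd B i j) = bd (fun p s t => A p s t + B p s t) := by
  funext i j
  rcases eq_or_ne i.1 j.1 with h | h <;> simp [bd, h]

/-! ### square root facts -/

lemma facts (l u : ℝ) (hl : 1 ≤ l) (hu : 1 ≤ u) :
    (Real.sqrt (l-1)/Real.sqrt (l-1+u/l)) ^ 2 + (Real.sqrt (u/l)/Real.sqrt (l-1+u/l)) ^ 2 = 1 ∧
    (Real.sqrt ((l-1+u/l)-1)) ^ 2 = (l-1+u/l) - 1 ∧
    (l-1+u/l) * (Real.sqrt (l-1)/Real.sqrt (l-1+u/l)) ^ 2 = l - 1 ∧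
    (l-1+u/l) * (Real.sqrt (u/l)/Real.sqrt (l-1+u/l)) ^ 2 = u / l ∧
    (l-1+u/l) * ((Real.sqrt (l-1)/Real.sqrt (l-1+u/l)) * (Real.sqrt (u/l)/Real.sqrt (l-1+u/l)))
      = Real.sqrt (l-1) * Real.sqrt (u/l) ∧
    (Real.sqrt (l-1) * Real.sqrt (u/l)) ^ 2 = (l-1) * (u/l) ∧
    (l-1) * (u/l) + u/l = u := by
  have hl0 : (0:ℝ) < l := lt_of_lt_of_le one_pos hl
  have hl1 : (0:ℝ) ≤ l - 1 := by linarith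
  have hul : (0:ℝ) < u / l := div_pos (by linarith) hl0
  have hc0 : (0:ℝ) < l - 1 + u / l := by linarith
  have hq' : u / l * l = u := div_mul_cancel₀ u hl0.ne'
  have hc1 : (1:ℝ) ≤ l - 1 + u / l := by nlinarith [sq_nonneg (l - 1)]
  have hsc : Real.sqrt (l-1+u/l) ^ 2 = l-1+u/l := Real.sq_sqrt hc0.le
  have hscne : Real.sqrt (l-1+u/l) ≠ 0 := (Real.sqrt_pos.mpr hc0).ne'
  refine ⟨?_, Real.sq_sqrt (by linarith), ?_, ?_, ?_, ?_, ?_⟩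
  · rw [div_pow, div_pow, hsc, Real.sq_sqrt hl1, Real.sq_sqrt hul.le]
    field_simp
  · rw [div_pow, hsc, Real.sq_sqrt hl1, mul_div_cancel₀ _ hc0.ne']
  · rw [div_pow, hsc, Real.sq_sqrt hul.le, mul_div_cancel₀ _ hc0.ne']
  · rw [div_mul_div_comm, Real.mul_self_sqrt hc0.le, mul_div_cancel₀ _ hc0.ne']
  · rw [mul_pow, Real.sq_sqrt hl1, Real.sq_sqrt hul.le]
  · field_simp
    ring

end Stmt10Aux

open Stmt10Aux

theorem stmt_10 {𝕜 E : Type*} [RCLike 𝕜] [NormedAddCommGroup E]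
    [InnerProductSpace 𝕜 E] [FiniteDimensional 𝕜 E]
    (T : E →ₗ[𝕜] E) (hsa : T.IsSymmetric)
    (hpos : ∀ x : E, 0 ≤ RCLike.re (inner 𝕜 (T x) x : 𝕜))
    (heven : Even (Module.finrank 𝕜 E))
    (hrank : Module.finrank 𝕜 E < 2 * Module.finrank 𝕜 (LinearMap.range T))
    (heig : ∀ μ : ℝ, μ ≠ 0 → Module.End.HasEigenvalue T ((μ : ℝ) : 𝕜) → 1 ≤ μ) :
    ∃ P₁ P₂ : E →ₗ[𝕜] E, P₁ ∘ₗ P₁ = P₁ ∧ P₂ ∘ₗ P₂ = P₂ ∧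
      T = (LinearMap.adjoint P₁) ∘ₗ P₁ + (LinearMap.adjoint P₂) ∘ₗ P₂ := by
  classical
  obtain ⟨m, hm⟩ := heven
  set n := Module.finrank 𝕜 E with hn
  let b : OrthonormalBasis (Fin n) 𝕜 E := hsa.eigenvectorBasis rfl
  let lam : Fin n → ℝ := hsa.eigenvalues rfl
  have hlam : ∀ i, lam i ≠ 0 → 1 ≤ lam i := fun i h =>
    heig _ h (hsa.hasEigenvalue_eigenvalues rfl i)
  have hTsum : T = ∑ i, ((lam i : 𝕜)) • ro (b i) (b i) := by
    apply LinearMap.ext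
    intro x
    conv_lhs => rw [← b.sum_repr x]
    rw [map_sum]
    simp only [LinearMap.sum_apply, LinearMap.smul_apply, ro_apply, map_smul,
      OrthonormalBasis.repr_apply_apply]
    refine Finset.sum_congr rfl fun i _ => ?_
    rw [hsa.apply_eigenvectorBasis]
    rw [smul_comm]
  -- rank bound
  have hr1 : Module.finrank 𝕜 (LinearMap.range T)
      ≤ (Finset.univ.filter (fun i : Fin n => ¬ lam i = 0)).card := by
    set Nf := Finset.univ.filter (fun i : Fin n => ¬ lam i = 0) with hNf
    have hsub : LinearMap.range T ≤ Submodule.span 𝕜 ((Nf.image b : Finset E) : Set E) := by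
      rintro x ⟨y, rfl⟩
      rw [hTsum]
      simp only [LinearMap.sum_apply, LinearMap.smul_apply, ro_apply]
      refine Submodule.sum_mem _ fun i _ => ?_
      by_cases h : lam i = 0
      · simp [h]
      · refine Submodule.smul_mem _ _ (Submodule.smul_mem _ _ (Submodule.subset_span ?_))
        simp only [Finset.coe_image, Set.mem_image, Finset.mem_coe]
        exact ⟨i, by simp [hNf, h], rfl⟩
    calc Module.finrank 𝕜 (LinearMap.range T)
        ≤ Module.finrank 𝕜 (Submodule.span 𝕜 ((Nf.image b : Finset E) : Set E)) :=
          Submodule.finrank_mono hsub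
      _ ≤ (Nf.image b).card := finrank_span_finset_le_card _
      _ ≤ Nf.card := Finset.card_image_le
  have hcards : (Finset.univ.filter (fun i : Fin n => lam i = 0)).card
      + (Finset.univ.filter (fun i : Fin n => ¬ lam i = 0)).card = n := by
    rw [Finset.card_filter_add_card_filter_not]
    simp
  have hZc : (Finset.univ.filter (fun i : Fin n => lam i = 0)).card ≤ m := by omega
  -- choose S
  obtain ⟨S, hZS, -, hScard⟩ := Finset.exists_subsuperset_card_eq
    (Finset.subset_univ (Finset.univ.filter (fun i : Fin n => lam i = 0))) hZc
    (by simp only [Finset.card_univ, Fintype.card_fin]; omega)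
  have hcardS : Fintype.card {x : Fin n // x ∈ S} = m := by simp [hScard]
  have hcardSc : Fintype.card {x : Fin n // x ∉ S} = m := by
    rw [Fintype.card_subtype_compl]
    simp [hcardS, hm]
  let eS : Fin m ≃ {x : Fin n // x ∈ S} := (Fintype.equivFinOfCardEq hcardS).symm
  let eSc : Fin m ≃ {x : Fin n // x ∉ S} := (Fintype.equivFinOfCardEq hcardSc).symm
  let e : Fin m × Bool ≃ Fin n :=
    (Equiv.prodComm _ _).trans ((Equiv.boolProdEquivSum _).trans
      ((Equiv.sumCongr eSc eS).trans ((Equiv.sumComm _ _).trans (Equiv.sumCompl (· ∈ S)))))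
  have hef : ∀ p : Fin m, e (p, false) = (eSc p).1 := fun p => rfl
  have heNS : ∀ p : Fin m, lam (e (p, false)) ≠ 0 := by
    intro p h0
    exact (hef p ▸ (eSc p).2) (hZS (by simp [h0]))
  set v : Fin m × Bool → E := fun q => b (e q) with hv_def
  have hv : Orthonormal 𝕜 v := b.orthonormal.comp _ e.injective
  set l : Fin m → ℝ := fun p => lam (e (p, false)) with hl_def
  set u : Fin m → ℝ := fun p => lam (e (p, true)) with hu_def
  have hl : ∀ p, 1 ≤ l p := fun p => hlam _ (heNS p)
  have hu : ∀ p, u p = 0 ∨ 1 ≤ u p := fun p => by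
    by_cases h : u p = 0
    · exact Or.inl h
    · exact Or.inr (hlam _ h)
  -- blocks
  set Ab : Fin m → Bool → Bool → ℝ := fun p =>
    if u p = 0 then Azmat (Real.sqrt (l p - 1))
    else Amat (Real.sqrt (l p - 1) * Real.sqrt (u p / l p)) with hAb
  set Bb : Fin m → Bool → Bool → ℝ := fun p =>
    if u p = 0 then 0
    else Bmat (Real.sqrt (l p - 1) / Real.sqrt (l p - 1 + u p / l p))
      (Real.sqrt (u p / l p) / Real.sqrt (l p - 1 + u p / l p))
      (Real.sqrt ((l p - 1 + u p / l p) - 1)) with hBb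
  refine ⟨op v (bd Ab), op v (bd Bb), ?_, ?_, ?_⟩
  · rw [op_comp v hv, bd_mul]
    refine congrArg (op v) (congrArg bd (funext fun p => ?_))
    by_cases h : u p = 0
    · have hA : Ab p = Azmat (Real.sqrt (l p - 1)) := by simp [hAb, h]
      rw [hA]; exact Azmat_idem _
    · have hA : Ab p = Amat (Real.sqrt (l p - 1) * Real.sqrt (u p / l p)) := by simp [hAb, h]
      rw [hA]; exact Amat_idem _
  · rw [op_comp v hv, bd_mul]
    refine congrArg (op v) (congrArg bd (funext fun p => ?_))
    by_cases h : u p = 0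
    · have hB : Bb p = 0 := by simp [hBb, h]
      rw [hB]
      funext s t
      simp [mul2]
    · have hB : Bb p = Bmat (Real.sqrt (l p - 1) / Real.sqrt (l p - 1 + u p / l p))
          (Real.sqrt (u p / l p) / Real.sqrt (l p - 1 + u p / l p))
          (Real.sqrt ((l p - 1 + u p / l p) - 1)) := by simp [hBb, h]
      rw [hB]
      obtain ⟨h1, -, -, -, -, -, -⟩ := facts (l p) (u p) (hl p) ((hu p).resolve_left h)
      exact Bmat_idem _ _ _ h1
  · rw [op_adjoint, op_adjoint, bd_tr, bd_tr, op_comp v hv, op_comp v hv, bd_mul, bd_mul, op_add]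
    have hbd : (fun (i j : Fin m × Bool) =>
        bd (fun p => mul2 (tr2 (Ab p)) (Ab p)) i j + bd (fun p => mul2 (tr2 (Bb p)) (Bb p)) i j)
        = bd (fun p => diag2 (l p) (u p)) := by
      rw [bd_add]
      refine congrArg bd (funext fun p => ?_)
      by_cases h : u p = 0
      · have hA : Ab p = Azmat (Real.sqrt (l p - 1)) := by simp [hAb, h]
        have hB : Bb p = 0 := by simp [hBb, h]
        rw [hA, hB, show diag2 (l p) (u p) = diag2 (l p) 0 by rw [h]]
        exact Az_sum (l p) _ (Real.sq_sqrt (by linarith [hl p]))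
      · have hA : Ab p = Amat (Real.sqrt (l p - 1) * Real.sqrt (u p / l p)) := by
          simp [hAb, h]
        have hB : Bb p = Bmat (Real.sqrt (l p - 1) / Real.sqrt (l p - 1 + u p / l p))
            (Real.sqrt (u p / l p) / Real.sqrt (l p - 1 + u p / l p))
            (Real.sqrt ((l p - 1 + u p / l p) - 1)) := by simp [hBb, h]
        rw [hA, hB]
        obtain ⟨h1, hd, hp2, hq2, hpq, ht2, hful⟩ :=
          facts (l p) (u p) (hl p) ((hu p).resolve_left h)
        exact AB_sum (l p) (u p) _ _ _ _ _ h1 hd hp2 hq2 hpq ht2 hful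
    rw [hbd]
    rw [op_diagonal v (fun q => lam (e q)) _ ?_]
    · rw [hTsum, ← Equiv.sum_comp e (fun i => ((lam i : 𝕜)) • ro (b i) (b i))]
    · rintro ⟨pi, si⟩ ⟨pj, sj⟩
      by_cases hp : pi = pj
      · subst hp
        cases si <;> cases sj <;> simp [bd, diag2, hl_def, hu_def]
      · simp [bd, hp, Prod.ext_iff]
end

section
/- Let T be a nonzero positive semidefinite self-adjoint operator on an n-dimensional inner product space. Then there exist a weight v > 0 and two idempotents P₁, P₂ such that T = v²P₁*P₁ + v²P₂*P₂. -/
/-!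
In an orthonormal eigenbasis `T` is the diagonal matrix of its eigenvalues `μᵢ ≥ 0`. Let `c` be
the least nonzero eigenvalue and `v² = c / 2`. Group the eigenvalues into pairs and, when `n` is
odd, one singleton taken at the least eigenvalue, so that it is `0` or `c` and hence equals
`c / 2 · (P + P)` for `P ∈ {0, 1}`. A pair `diag(a, b)` of zeros is `0`; otherwise `a + b ≥ c`,
and `diag(a, b) = c / 2 · (Q₊ᵀQ₊ + Q₋ᵀQ₋)` for the rank-one idempotents `Q± = w± u±ᵀ` with
`u± = (√a, ±√b)`, `w± = (u± + h u±⊥) / (a + b)`, where `u±⊥` is `u±` rotated by a right angle and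
`h² = (a + b) / c - 1`: indeed `u±ᵀ w± = 1`, `|w±|² = 1 / c` and `u₊u₊ᵀ + u₋u₋ᵀ = 2 diag(a, b)`.
The block-diagonal sums of these idempotents are the required `P₁`, `P₂`.
-/

open Matrix

def IsIdempotentGramSum {S R : Type*} [Mul R] [Add R] [Star R] [SMul S R] (t : S) (A : R) :
    Prop :=
  ∃ P₁ P₂ : R, IsIdempotentElem P₁ ∧ IsIdempotentElem P₂ ∧ A = t • (star P₁ * P₁ + star P₂ * P₂)

namespace IsIdempotentGramSum

theorem map {S S' R R' F : Type*} [NonUnitalNonAssocSemiring R] [Star R] [SMul S R]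
    [NonUnitalNonAssocSemiring R'] [Star R'] [SMul S' R'] [FunLike F R R']
    [NonUnitalRingHomClass F R R'] (f : F) {t : S} {t' : S'}
    (hstar : ∀ x, f (star x) = star (f x)) (hsmul : ∀ x, f (t • x) = t' • f x) {A : R}
    (h : IsIdempotentGramSum t A) : IsIdempotentGramSum t' (f A) := by
  obtain ⟨P₁, P₂, h₁, h₂, rfl⟩ := h
  exact ⟨f P₁, f P₂, h₁.map f, h₂.map f, by simp only [hsmul, hstar, map_add, map_mul]⟩

theorem zero {S R : Type*} [NonUnitalNonAssocSemiring R] [StarAddMonoid R] [SMulZeroClass S R]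
    {t : S} : IsIdempotentGramSum t (0 : R) :=
  ⟨0, 0, .zero, .zero, by simp⟩

theorem map_ofReal {𝕜 n : Type*} [RCLike 𝕜] [Fintype n] [DecidableEq n] {t : ℝ} {A : Matrix n n ℝ}
    (h : IsIdempotentGramSum t A) : IsIdempotentGramSum (t : 𝕜) (A.map ((↑) : ℝ → 𝕜)) :=
  h.map (algebraMap ℝ 𝕜).mapMatrix (fun _ => conjTranspose_map _ fun _ => by simp)
    fun _ => by ext; simp

variable {α l m o : Type*} [Semiring α] [StarRing α] [Fintype l] [Fintype m] {t : α}

theorem fromBlocks {A : Matrix l l α} {B : Matrix m m α} (hA : IsIdempotentGramSum t A)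
    (hB : IsIdempotentGramSum t B) : IsIdempotentGramSum t (Matrix.fromBlocks A 0 0 B) := by
  obtain ⟨P₁, P₂, hP₁, hP₂, rfl⟩ := hA
  obtain ⟨Q₁, Q₂, hQ₁, hQ₂, rfl⟩ := hB
  refine ⟨Matrix.fromBlocks P₁ 0 0 Q₁, Matrix.fromBlocks P₂ 0 0 Q₂, ?_, ?_, ?_⟩
  · simp [IsIdempotentElem, fromBlocks_multiply, hP₁.eq, hQ₁.eq]
  · simp [IsIdempotentElem, fromBlocks_multiply, hP₂.eq, hQ₂.eq]
  · simp [star_eq_conjTranspose, fromBlocks_conjTranspose, fromBlocks_multiply, fromBlocks_add,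
      fromBlocks_smul]

theorem blockDiagonal [Fintype o] [DecidableEq o] {A : o → Matrix m m α}
    (h : ∀ k, IsIdempotentGramSum t (A k)) : IsIdempotentGramSum t (Matrix.blockDiagonal A) := by
  choose P₁ P₂ hP₁ hP₂ hA using h
  refine ⟨Matrix.blockDiagonal P₁, Matrix.blockDiagonal P₂, ?_, ?_, ?_⟩
  · simp [IsIdempotentElem, ← blockDiagonal_mul, fun k => (hP₁ k).eq]
  · simp [IsIdempotentElem, ← blockDiagonal_mul, fun k => (hP₂ k).eq]
  · simp only [star_eq_conjTranspose, blockDiagonal_conjTranspose, ← blockDiagonal_mul,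
      ← blockDiagonal_add, ← blockDiagonal_smul]
    congr 1
    funext k
    simp [hA k, star_eq_conjTranspose]

end IsIdempotentGramSum

theorem Matrix.isIdempotentElem_vecMulVec {α n : Type*} [Semiring α] [Fintype n] {u w : n → α}
    (h : u ⬝ᵥ w = 1) : IsIdempotentElem (vecMulVec w u) := by
  rw [IsIdempotentElem, vecMulVec_mul_vecMulVec, h, one_smul]

theorem Matrix.transpose_vecMulVec_mul_self {α n : Type*} [CommSemiring α] [Fintype n]
    (u w : n → α) : (vecMulVec w u)ᵀ * vecMulVec w u = (w ⬝ᵥ w) • vecMulVec u u := by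
  rw [transpose_vecMulVec, vecMulVec_mul_vecMulVec]
  ext i j
  simp [vecMulVec_apply, mul_left_comm]

theorem isIdempotentGramSum_diagonal_two {a b c : ℝ} (ha : 0 ≤ a) (hb : 0 ≤ b) (hc : 0 < c)
    (hab : c ≤ a + b) : IsIdempotentGramSum (c / 2) (diagonal ![a, b]) := by
  set h := √((a + b) / c - 1)
  have hs : a + b ≠ 0 := (hc.trans_le hab).ne'
  have hh : c * (1 + h ^ 2) = a + b := by
    rw [Real.sq_sqrt (by rw [sub_nonneg, le_div_iff₀ hc]; linarith)]
    field_simp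
    ring
  have hx : √a ^ 2 = a := Real.sq_sqrt ha
  let u (q : ℝ) : Fin 2 → ℝ := ![√a, q]
  let w (q : ℝ) : Fin 2 → ℝ := (a + b)⁻¹ • ![√a - h * q, q + h * √a]
  have hdot (q : ℝ) (hq : q ^ 2 = b) : u q ⬝ᵥ w q = 1 ∧ w q ⬝ᵥ w q = c⁻¹ := by
    simp only [u, w, dotProduct, Fin.sum_univ_two, Pi.smul_apply, smul_eq_mul, cons_val_zero,
      cons_val_one, cons_val_fin_one]
    constructor
    · field_simp
      linear_combination hx + hq
    · field_simp
      linear_combination c * (1 + h ^ 2) * (hx + hq) + (a + b) * hh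
  obtain ⟨hu₁, hw₁⟩ := hdot (√b) (Real.sq_sqrt hb)
  obtain ⟨hu₂, hw₂⟩ := hdot (-√b) (by rw [neg_sq, Real.sq_sqrt hb])
  refine ⟨vecMulVec (w √b) (u √b), vecMulVec (w (-√b)) (u (-√b)), isIdempotentElem_vecMulVec hu₁,
    isIdempotentElem_vecMulVec hu₂, ?_⟩
  simp only [star_eq_conjTranspose, conjTranspose_eq_transpose_of_trivial,
    transpose_vecMulVec_mul_self, hw₁, hw₂]
  rw [← smul_add, smul_smul, show c / 2 * c⁻¹ = 2⁻¹ by field_simp]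
  ext i j
  fin_cases i <;> fin_cases j <;>
    simp [u, Real.mul_self_sqrt ha, Real.mul_self_sqrt hb, ← two_mul]

theorem isIdempotentGramSum_diagonal_fin_two {d : Fin 2 → ℝ} {c : ℝ} (hc : 0 < c)
    (hd : ∀ j, d j = 0 ∨ c ≤ d j) : IsIdempotentGramSum (c / 2) (diagonal d) := by
  have hd₀ : ∀ j, 0 ≤ d j := fun j => (hd j).elim (·.ge) hc.le.trans
  by_cases h : d 0 = 0 ∧ d 1 = 0
  · have : d = 0 := funext fun j => by fin_cases j <;> simp [h.1, h.2]
    simpa [this] using IsIdempotentGramSum.zero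
  · have hsum : c ≤ d 0 + d 1 := by
      rcases not_and_or.mp h with h | h
      · linarith [(hd 0).resolve_left h, hd₀ 1]
      · linarith [(hd 1).resolve_left h, hd₀ 0]
    have : d = ![d 0, d 1] := funext fun j => by fin_cases j <;> rfl
    rw [this]
    exact isIdempotentGramSum_diagonal_two (hd₀ 0) (hd₀ 1) hc hsum

theorem isIdempotentGramSum_diagonal_of_eq_zero_or_eq {σ : Type*} [Fintype σ] [DecidableEq σ]
    {d : σ → ℝ} {c : ℝ} (hc : 0 < c) (hd : ∀ s, d s = 0 ∨ d s = c) :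
    IsIdempotentGramSum (c / 2) (diagonal d) := by
  have hP : IsIdempotentElem (diagonal fun s => d s / c) := by
    rw [IsIdempotentElem, diagonal_mul_diagonal]
    congr 1
    funext s
    rcases hd s with h | h <;> simp [h, hc.ne']
  refine ⟨_, _, hP, hP, ?_⟩
  rw [star_eq_conjTranspose, diagonal_conjTranspose, star_trivial, hP.eq, ← two_smul ℝ,
    smul_smul]
  ext i j
  rcases eq_or_ne i j with rfl | hij
  · simp only [Matrix.smul_apply, diagonal_apply_eq, smul_eq_mul]
    field_simp
  · simp [diagonal_apply_ne _ hij]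

theorem isIdempotentGramSum_diagonal {κ σ : Type*} [Fintype κ] [DecidableEq κ] [Fintype σ]
    [DecidableEq σ] {μ : Fin 2 × κ ⊕ σ → ℝ} {c : ℝ} (hc : 0 < c)
    (hpair : ∀ i, μ (.inl i) = 0 ∨ c ≤ μ (.inl i))
    (hsingle : ∀ s, μ (.inr s) = 0 ∨ μ (.inr s) = c) :
    IsIdempotentGramSum (c / 2) (diagonal μ) := by
  have hμ : diagonal μ = fromBlocks (blockDiagonal fun k => diagonal fun j => μ (.inl (j, k))) 0 0
      (diagonal fun s => μ (.inr s)) := by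
    rw [blockDiagonal_diagonal, fromBlocks_diagonal]
    congr 1
    funext i
    rcases i with ⟨j, k⟩ | s <;> rfl
  rw [hμ]
  exact .fromBlocks
    (.blockDiagonal fun _ => isIdempotentGramSum_diagonal_fin_two hc fun _ => hpair _)
    (isIdempotentGramSum_diagonal_of_eq_zero_or_eq hc hsingle)

def finPairsSumEquiv (n : ℕ) : Fin 2 × Fin (n / 2) ⊕ Fin (n % 2) ≃ Fin n :=
  (finProdFinEquiv.sumCongr (Equiv.refl _)).trans
    (finSumFinEquiv.trans (finCongr (Nat.div_add_mod n 2)))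

theorem le_finPairsSumEquiv_inr {n : ℕ} (j : Fin n) (s : Fin (n % 2)) :
    j ≤ finPairsSumEquiv n (.inr s) := by
  rw [Fin.le_iff_val_le_val]
  simp only [finPairsSumEquiv, Equiv.trans_apply, Equiv.sumCongr_apply, Sum.map_inr,
    finSumFinEquiv_apply_right, finCongr_apply, Fin.val_cast, Fin.val_natAdd]
  omega

theorem exists_pos_forall_eq_zero_or_le {ι : Type*} [Fintype ι] {μ : ι → ℝ}
    (hμ : ∀ i, 0 ≤ μ i) (hne : ∃ i, μ i ≠ 0) :
    ∃ c > 0, (∀ i, μ i = 0 ∨ c ≤ μ i) ∧ ∀ i, (∀ j, μ i ≤ μ j) → μ i = 0 ∨ μ i = c := by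
  classical
  obtain ⟨i₁, hi₁⟩ := hne
  have hS : (Finset.univ.filter (μ · ≠ 0)).Nonempty := ⟨i₁, by simpa using hi₁⟩
  obtain ⟨j, hj, hcj⟩ := Finset.exists_mem_eq_inf' hS μ
  have hle : ∀ i, μ i ≠ 0 → (Finset.univ.filter (μ · ≠ 0)).inf' hS μ ≤ μ i :=
    fun i hi => Finset.inf'_le _ (by simpa using hi)
  refine ⟨_, hcj ▸ (hμ j).lt_of_ne' (by simpa using hj), fun i => ?_, fun i hi => ?_⟩
  · exact (eq_or_ne (μ i) 0).imp_right (hle i)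
  · exact (eq_or_ne (μ i) 0).imp_right fun h => (hle i h).antisymm' (hcj ▸ hi j)

theorem LinearMap.IsSymmetric.toMatrixOrthonormal_eigenvectorBasis {𝕜 E : Type*} [RCLike 𝕜]
    [NormedAddCommGroup E] [InnerProductSpace 𝕜 E] [FiniteDimensional 𝕜 E] {T : E →ₗ[𝕜] E}
    (hT : T.IsSymmetric) {n : ℕ} (hn : Module.finrank 𝕜 E = n) :
    LinearMap.toMatrixOrthonormal (hT.eigenvectorBasis hn) T =
      diagonal (RCLike.ofReal ∘ hT.eigenvalues hn) :=
  hT.toMatrix_eigenvectorBasis hn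

theorem stmt_11 {𝕜 E : Type*} [RCLike 𝕜] [NormedAddCommGroup E]
    [InnerProductSpace 𝕜 E] [FiniteDimensional 𝕜 E]
    (T : E →ₗ[𝕜] E) (hT : T ≠ 0) (hsa : T.IsSymmetric)
    (hpos : ∀ x : E, 0 ≤ RCLike.re (inner 𝕜 (T x) x : 𝕜)) :
    ∃ (v : ℝ) (P₁ P₂ : E →ₗ[𝕜] E), 0 < v ∧ P₁ ∘ₗ P₁ = P₁ ∧ P₂ ∘ₗ P₂ = P₂ ∧
      T = ((v ^ 2 : ℝ) : 𝕜) • ((LinearMap.adjoint P₁) ∘ₗ P₁) +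
          ((v ^ 2 : ℝ) : 𝕜) • ((LinearMap.adjoint P₂) ∘ₗ P₂) := by
  set n := Module.finrank 𝕜 E
  set μ := hsa.eigenvalues (n := n) rfl
  set e := finPairsSumEquiv n
  set b := (hsa.eigenvectorBasis rfl).reindex e.symm
  have hTb : LinearMap.toMatrixOrthonormal b T = (diagonal (μ ∘ e)).map (↑) := by
    rw [LinearMap.toMatrixOrthonormal_reindex, hsa.toMatrixOrthonormal_eigenvectorBasis,
      reindex_apply, submatrix_diagonal_equiv, diagonal_map RCLike.ofReal_zero]
    rfl
  have hμ₀ : ∀ i, 0 ≤ μ i := (show T.IsPositive from ⟨hsa, hpos⟩).nonneg_eigenvalues rfl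
  have hμ : ∃ i, μ i ≠ 0 := by
    by_contra! h
    apply hT
    rw [← EmbeddingLike.map_eq_zero_iff (f := LinearMap.toMatrixOrthonormal b), hTb]
    ext i j
    simp [diagonal_apply, h]
  obtain ⟨c, hc, hle, hmin⟩ := exists_pos_forall_eq_zero_or_le hμ₀ hμ
  have hsingle (s : Fin (n % 2)) : μ (e (.inr s)) = 0 ∨ μ (e (.inr s)) = c :=
    hmin _ fun j => hsa.eigenvalues_antitone rfl (le_finPairsSumEquiv_inr j s)
  have hdiag : IsIdempotentGramSum (c / 2) (diagonal (μ ∘ e)) :=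
    isIdempotentGramSum_diagonal hc (fun _ => hle _) hsingle
  obtain ⟨P₁, P₂, h₁, h₂, hTP⟩ := (hdiag.map_ofReal (𝕜 := 𝕜)).map
    (LinearMap.toMatrixOrthonormal b).symm (map_star _) (map_smul _ _)
  rw [← hTb, StarAlgEquiv.symm_apply_apply] at hTP
  refine ⟨√(c / 2), P₁, P₂, by positivity, h₁, h₂, ?_⟩
  rw [Real.sq_sqrt (by positivity), ← smul_add]
  exact hTP
end

section
/- Let n₁, ..., n_m be positive integers with n₁ + ⋯ + n_m ≥ n and each n_i ≤ n/2. Then there exist idempotents P₁, ..., P_m on an n-dimensional inner product space with rank P_i = n_i and a constant λ > 0 such that Σᵢ P_i*P_i = λ·I. -/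
/-!
Fix an orthonormal basis `b` of `E` (`n = dim E`). If `e₁, …, e_k, f₁, …, f_k` are orthonormal and
`aⱼ ≥ 1`, then `P x = ∑ⱼ ⟪eⱼ, x⟫ (eⱼ + √(aⱼ - 1) fⱼ)` is an idempotent of rank `k` with
`P* P = ∑ⱼ aⱼ eⱼ eⱼ*`, since `⟪eᵢ, eⱼ + √(aⱼ - 1) fⱼ⟫ = δᵢⱼ` and `‖eⱼ + √(aⱼ - 1) fⱼ‖² = aⱼ`.
Laying the blocks of sizes `dᵢ` end to end around `ℤ/n` covers every basis index (as `∑ dᵢ ≥ n`)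
and is injective on each block (as `dᵢ ≤ n`); because `2 dᵢ ≤ n`, each block `eᵢ` of basis vectors
has room for a disjoint block `fᵢ`. Weighting a basis vector hit `t` times by `c / t` makes
`∑ᵢ Pᵢ* Pᵢ = c • id`.
-/

open scoped InnerProductSpace
open Function InnerProductSpace

lemma Function.Injective.exists_injective_sumElim {α β : Type*} [Fintype α] [Fintype β]
    {g : α → β} (hg : Injective g) (hcard : 2 * Fintype.card α ≤ Fintype.card β) :
    ∃ h : α → β, Injective (Sum.elim g h) := by
  classical
  have hcompl : Fintype.card α ≤ Fintype.card ((Set.range g)ᶜ : Set β) := by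
    rw [Fintype.card_compl_set, Set.card_range_of_injective hg]
    omega
  obtain ⟨h⟩ := Function.Embedding.nonempty_of_card_le hcompl
  exact ⟨fun a => h a, hg.sumElim (Subtype.val_injective.comp h.injective)
    fun a b hab => (h b).2 ⟨a, hab⟩⟩

lemma exists_surjective_injective_sigma_fin {m n : ℕ} (d : Fin m → ℕ)
    (hsum : n ≤ ∑ i, d i) (hle : ∀ i, d i ≤ n) :
    ∃ s : (Σ i, Fin (d i)) → Fin n, Surjective s ∧ ∀ i, Injective fun j => s ⟨i, j⟩ := by
  refine ⟨fun p => ⟨finSigmaFinEquiv p % n, Nat.mod_lt _ (p.2.pos.trans_le (hle p.1))⟩, ?_, ?_⟩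
  · intro r
    refine ⟨finSigmaFinEquiv.symm ⟨r, r.2.trans_le hsum⟩, Fin.ext ?_⟩
    simp [Nat.mod_eq_of_lt r.2]
  · intro i j k hjk
    have hval := congrArg Fin.val hjk
    simp only [finSigmaFinEquiv_apply] at hval
    have hmod := Nat.ModEq.add_left_cancel' _ hval
    rw [Nat.ModEq, Nat.mod_eq_of_lt (j.2.trans_le (hle i)),
      Nat.mod_eq_of_lt (k.2.trans_le (hle i))] at hmod
    exact Fin.ext hmod

lemma sum_div_card_fiber_smul {ι κ K M : Type*} [Fintype ι] [Fintype κ] [DecidableEq κ]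
    [Field K] [CharZero K] [AddCommGroup M] [Module K M] {s : ι → κ} (hs : Surjective s)
    (c : K) (f : κ → M) :
    ∑ p, (c / (Finset.univ.filter fun q => s q = s p).card) • f (s p) = c • ∑ r, f r := by
  rw [← Finset.sum_fiberwise Finset.univ s, Finset.smul_sum]
  refine Finset.sum_congr rfl fun r _ => ?_
  obtain ⟨p, rfl⟩ := hs r
  have hne : ((Finset.univ.filter fun q => s q = s p).card : K) ≠ 0 :=
    Nat.cast_ne_zero.mpr (Finset.card_ne_zero.mpr ⟨p, by simp⟩)
  rw [Finset.sum_congr rfl fun q hq => by rw [(Finset.mem_filter.mp hq).2], Finset.sum_const,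
    ← Nat.cast_smul_eq_nsmul K, smul_smul, mul_div_cancel₀ _ hne]

section RankOne

variable {𝕜 E ι : Type*} [RCLike 𝕜] [NormedAddCommGroup E] [InnerProductSpace 𝕜 E] [Fintype ι]
  [DecidableEq ι]

lemma sum_rankOne_comp_sum_rankOne (x y z w : ι → E) {c : ι → 𝕜}
    (h : ∀ i j, ⟪y i, z j⟫_𝕜 = if i = j then c i else 0) :
    (∑ i, rankOne 𝕜 (x i) (y i)) ∘L (∑ j, rankOne 𝕜 (z j) (w j)) =
      ∑ i, c i • rankOne 𝕜 (x i) (w i) := by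
  simp only [ContinuousLinearMap.finsetSum_comp, ContinuousLinearMap.comp_finsetSum,
    rankOne_comp_rankOne, h, ite_smul, zero_smul, Finset.sum_ite_eq', Finset.mem_univ, if_true]

lemma linearIndependent_of_inner_eq_ite {e w : ι → E}
    (h : ∀ i j, ⟪e i, w j⟫_𝕜 = if i = j then 1 else 0) : LinearIndependent 𝕜 w := by
  rw [Fintype.linearIndependent_iff]
  intro g hg j
  simpa [inner_sum, inner_smul_right, h] using congrArg (fun v => ⟪e j, v⟫_𝕜) hg

lemma finrank_range_sum_rankOne {e w : ι → E}
    (h : ∀ i j, ⟪e i, w j⟫_𝕜 = if i = j then 1 else 0) :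
    Module.finrank 𝕜 (LinearMap.range ((∑ i, rankOne 𝕜 (w i) (e i) : E →L[𝕜] E) : E →ₗ[𝕜] E)) =
      Fintype.card ι := by
  have hrange : LinearMap.range ((∑ i, rankOne 𝕜 (w i) (e i) : E →L[𝕜] E) : E →ₗ[𝕜] E) =
      Submodule.span 𝕜 (Set.range w) := by
    apply le_antisymm
    · rintro _ ⟨x, rfl⟩
      simp only [FunLike.coe_sum, Finset.sum_apply, ContinuousLinearMap.coe_coe, rankOne_apply]
      exact Submodule.sum_mem _ fun i _ => Submodule.smul_mem _ _ (Submodule.subset_span ⟨i, rfl⟩)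
    · rw [Submodule.span_le]
      rintro _ ⟨j, rfl⟩
      exact ⟨w j, by simp [h]⟩
  rw [hrange, finrank_span_eq_card (linearIndependent_of_inner_eq_ite h)]

theorem exists_idempotent_adjoint_comp_self_eq_sum_rankOne [CompleteSpace E] {e f : ι → E}
    (hortho : Orthonormal 𝕜 (Sum.elim e f)) {a : ι → ℝ} (ha : ∀ i, 1 ≤ a i) :
    ∃ P : E →L[𝕜] E, P ∘L P = P ∧
      Module.finrank 𝕜 (LinearMap.range (P : E →ₗ[𝕜] E)) = Fintype.card ι ∧
      ContinuousLinearMap.adjoint P ∘L P = ∑ i, (a i : 𝕜) • rankOne 𝕜 (e i) (e i) := by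
  set w : ι → E := fun i => e i + (√(a i - 1) : 𝕜) • f i
  have hee : ∀ i j, ⟪e i, e j⟫_𝕜 = if i = j then 1 else 0 :=
    orthonormal_iff_ite.mp (hortho.comp _ Sum.inl_injective)
  have hff : ∀ i j, ⟪f i, f j⟫_𝕜 = if i = j then 1 else 0 :=
    orthonormal_iff_ite.mp (hortho.comp _ Sum.inr_injective)
  have hef : ∀ i j, ⟪e i, f j⟫_𝕜 = 0 := fun i j => hortho.2 Sum.inl_ne_inr
  have hfe : ∀ i j, ⟪f i, e j⟫_𝕜 = 0 := fun i j => hortho.2 Sum.inr_ne_inl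
  have hew : ∀ i j, ⟪e i, w j⟫_𝕜 = if i = j then 1 else 0 := fun i j => by
    simp [w, inner_add_right, inner_smul_right, hee, hef]
  have hww : ∀ i j, ⟪w i, w j⟫_𝕜 = if i = j then (a i : 𝕜) else 0 := fun i j => by
    split_ifs with hij
    · subst hij
      simp only [w, inner_add_left, inner_add_right, inner_smul_left, inner_smul_right, hee, hff,
        hef, hfe, if_pos, RCLike.conj_ofReal]
      have hsqrt : ((√(a i - 1) : ℝ) : 𝕜) * (√(a i - 1) : ℝ) = a i - 1 := by
        rw [← RCLike.ofReal_mul, Real.mul_self_sqrt (sub_nonneg.mpr (ha i))]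
        push_cast
        ring
      linear_combination hsqrt
    · simp [w, inner_add_left, inner_add_right, inner_smul_left, inner_smul_right, hee, hff, hef,
        hfe, hij]
  refine ⟨∑ i, rankOne 𝕜 (w i) (e i), ?_, finrank_range_sum_rankOne hew, ?_⟩
  · simp [sum_rankOne_comp_sum_rankOne w e w e hew]
  · simp only [map_sum, adjoint_rankOne]
    exact sum_rankOne_comp_sum_rankOne e w w e hww

end RankOne

theorem stmt_13_general {𝕜 E : Type*} [RCLike 𝕜] [NormedAddCommGroup E]
    [InnerProductSpace 𝕜 E] [FiniteDimensional 𝕜 E]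
    (m : ℕ) (d : Fin m → ℕ)
    (hsum : Module.finrank 𝕜 E ≤ ∑ i, d i)
    (hhalf : ∀ i, 2 * d i ≤ Module.finrank 𝕜 E) :
    ∃ (P : Fin m → (E →ₗ[𝕜] E)) (c : ℝ), 0 < c ∧
      (∀ i, P i ∘ₗ P i = P i) ∧
      (∀ i, Module.finrank 𝕜 (LinearMap.range (P i)) = d i) ∧
      ∑ i, (LinearMap.adjoint (P i)) ∘ₗ (P i) = ((c : ℝ) : 𝕜) • LinearMap.id := by
  classical
  have := FiniteDimensional.complete 𝕜 E
  let b := stdOrthonormalBasis 𝕜 E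
  obtain ⟨s, hs_surj, hs_inj⟩ :=
    exists_surjective_injective_sigma_fin d hsum fun i => by linarith [hhalf i]
  choose g hg using fun i => (hs_inj i).exists_injective_sumElim (by simpa using hhalf i)
  -- any `c` bounding the fibre sizes of `s` works; `+ 1` keeps it positive when `E = 0`
  set c : ℝ := Fintype.card (Σ i, Fin (d i)) + 1
  set a : (Σ i, Fin (d i)) → ℝ := fun p => c / (Finset.univ.filter fun q => s q = s p).card
  have ha : ∀ p, 1 ≤ a p := fun p => by
    rw [one_le_div₀ (by exact_mod_cast Finset.card_pos.mpr ⟨p, by simp⟩)]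
    exact (Nat.cast_le.mpr (Finset.card_filter_le _ _)).trans (by simp [c])
  choose P hP_idem hP_rank hP_adj using fun i =>
    exists_idempotent_adjoint_comp_self_eq_sum_rankOne (𝕜 := 𝕜)
      (e := b ∘ fun j => s ⟨i, j⟩) (f := b ∘ g i)
      (Sum.comp_elim b _ _ ▸ b.orthonormal.comp _ (hg i)) (fun j => ha ⟨i, j⟩)
  have hframe : ∑ i, ContinuousLinearMap.adjoint (P i) ∘L P i =
      (c : 𝕜) • ContinuousLinearMap.id 𝕜 E := by
    simp_rw [hP_adj]
    rw [Finset.sum_sigma', Finset.univ_sigma_univ, ← b.sum_rankOne_eq_id]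
    convert sum_div_card_fiber_smul hs_surj (c : 𝕜) (fun r => rankOne 𝕜 (b r) (b r)) using 2
    simp [a]
  refine ⟨fun i => P i, c, by positivity, fun i => congrArg ContinuousLinearMap.toLinearMap
    (hP_idem i), by simpa using hP_rank, ?_⟩
  simpa [ContinuousLinearMap.adjoint_toLinearMap] using
    congrArg ContinuousLinearMap.toLinearMap hframe

theorem stmt_13 {𝕜 E : Type*} [RCLike 𝕜] [NormedAddCommGroup E]
    [InnerProductSpace 𝕜 E] [FiniteDimensional 𝕜 E]
    (m : ℕ) (d : Fin m → ℕ) (hpos : ∀ i, 0 < d i)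
    (hsum : Module.finrank 𝕜 E ≤ ∑ i, d i)
    (hhalf : ∀ i, 2 * d i ≤ Module.finrank 𝕜 E) :
    ∃ (P : Fin m → (E →ₗ[𝕜] E)) (c : ℝ), 0 < c ∧
      (∀ i, P i ∘ₗ P i = P i) ∧
      (∀ i, Module.finrank 𝕜 (LinearMap.range (P i)) = d i) ∧
      ∑ i, (LinearMap.adjoint (P i)) ∘ₗ (P i) = ((c : ℝ) : 𝕜) • LinearMap.id :=
  stmt_13_general m d hsum hhalf
end

section
/- Suppose P₁, P₂ are idempotents on an n-dimensional inner product space with P₁*P₁ + P₂*P₂ = λI and rank P₁ + rank P₂ = n. If rank P₁ ≠ rank P₂ then λ = 1 and both P₁ and P₂ are orthogonal projections. -/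
/-!
Pairing `P₁† P₁ + P₂† P₂ = c • 1` with `x` gives `‖P₁ x‖² + ‖P₂ x‖² = c ‖x‖²`, so on the range
of `P₁`, where `P₁` is the identity, `‖P₂ y‖² = (c - 1) ‖y‖²`. If `c ≠ 1` this makes `P₂`
injective on the range of `P₁` (and symmetrically), forcing the two ranks to be equal.
Hence `c = 1`; then `P₂ P₁ = 0`, so applying the identity to `P₁ x` gives `P₁† P₁ = P₁`,
and `P₁` is self-adjoint since `P₁† P₁` is.
-/

open LinearMap Module

section TightPair

variable {𝕜 E : Type*} [RCLike 𝕜] [NormedAddCommGroup E] [InnerProductSpace 𝕜 E]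
  [FiniteDimensional 𝕜 E] {P Q : E →ₗ[𝕜] E} {c : ℝ}

theorem norm_sq_add_norm_sq_eq_of_adjoint_comp_add
    (h : adjoint P ∘ₗ P + adjoint Q ∘ₗ Q = ((c : ℝ) : 𝕜) • LinearMap.id) (x : E) :
    ‖P x‖ ^ 2 + ‖Q x‖ ^ 2 = c * ‖x‖ ^ 2 := by
  have hx : inner 𝕜 x (adjoint P (P x)) + inner 𝕜 x (adjoint Q (Q x)) =
      inner 𝕜 x (((c : ℝ) : 𝕜) • x) := by
    rw [← inner_add_right]
    exact congrArg (inner 𝕜 x) (LinearMap.congr_fun h x)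
  rw [adjoint_inner_right, adjoint_inner_right, inner_smul_right, inner_self_eq_norm_sq_to_K,
    inner_self_eq_norm_sq_to_K, inner_self_eq_norm_sq_to_K] at hx
  exact_mod_cast hx

theorem norm_sq_apply_eq_of_apply_eq_self
    (h : adjoint P ∘ₗ P + adjoint Q ∘ₗ Q = ((c : ℝ) : 𝕜) • LinearMap.id) {y : E}
    (hy : P y = y) : ‖Q y‖ ^ 2 = (c - 1) * ‖y‖ ^ 2 := by
  have hnorm := norm_sq_add_norm_sq_eq_of_adjoint_comp_add h y
  rw [hy] at hnorm
  linear_combination hnorm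

theorem finrank_range_le_of_adjoint_comp_add (hP : P ∘ₗ P = P)
    (h : adjoint P ∘ₗ P + adjoint Q ∘ₗ Q = ((c : ℝ) : 𝕜) • LinearMap.id) (hc : c ≠ 1) :
    finrank 𝕜 (range P) ≤ finrank 𝕜 (range Q) := by
  let f : range P →ₗ[𝕜] range Q := Q.restrict fun x _ ↦ mem_range_self Q x
  refine LinearMap.finrank_le_finrank_of_injective (f := f) ?_
  rw [injective_iff_map_eq_zero]
  rintro ⟨_, x, rfl⟩ hfx
  have hQ : Q (P x) = 0 := congrArg Subtype.val hfx
  have hnorm := norm_sq_apply_eq_of_apply_eq_self h (LinearMap.congr_fun hP x)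
  rw [hQ, norm_zero, zero_pow two_ne_zero, zero_eq_mul] at hnorm
  have hPx : P x = 0 := by simpa [sub_eq_zero, hc] using hnorm
  exact Subtype.ext hPx

theorem eq_one_of_finrank_range_ne (hP : P ∘ₗ P = P) (hQ : Q ∘ₗ Q = Q)
    (h : adjoint P ∘ₗ P + adjoint Q ∘ₗ Q = ((c : ℝ) : 𝕜) • LinearMap.id)
    (hne : finrank 𝕜 (range P) ≠ finrank 𝕜 (range Q)) : c = 1 := by
  by_contra hc
  exact hne <| le_antisymm (finrank_range_le_of_adjoint_comp_add hP h hc)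
    (finrank_range_le_of_adjoint_comp_add hQ (add_comm (adjoint P ∘ₗ P) _ ▸ h) hc)

theorem adjoint_eq_self_of_adjoint_comp_self_eq (h : adjoint P ∘ₗ P = P) : adjoint P = P := by
  conv_lhs => rw [← h]
  rw [adjoint_comp, adjoint_adjoint, h]

theorem comp_eq_zero_of_adjoint_comp_add_eq_id (hP : P ∘ₗ P = P)
    (h : adjoint P ∘ₗ P + adjoint Q ∘ₗ Q = LinearMap.id) : Q ∘ₗ P = 0 := by
  ext x
  have hnorm := norm_sq_apply_eq_of_apply_eq_self (c := 1) (Q := Q) (by simpa using h)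
    (LinearMap.congr_fun hP x)
  simpa using hnorm

theorem adjoint_eq_self_of_adjoint_comp_add_eq_id (hP : P ∘ₗ P = P)
    (h : adjoint P ∘ₗ P + adjoint Q ∘ₗ Q = LinearMap.id) : adjoint P = P := by
  have hQP := comp_eq_zero_of_adjoint_comp_add_eq_id hP h
  refine adjoint_eq_self_of_adjoint_comp_self_eq (LinearMap.ext fun x ↦ ?_)
  calc (adjoint P ∘ₗ P) x = adjoint P (P (P x)) := by rw [← comp_apply P P, hP]; rfl
    _ = (adjoint P ∘ₗ P + adjoint Q ∘ₗ Q) (P x) := by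
      simp [← comp_apply Q P, hQP]
    _ = P x := LinearMap.congr_fun h (P x)

end TightPair

theorem stmt_15_general {𝕜 E : Type*} [RCLike 𝕜] [NormedAddCommGroup E]
    [InnerProductSpace 𝕜 E] [FiniteDimensional 𝕜 E]
    (P₁ P₂ : E →ₗ[𝕜] E) (h₁ : P₁ ∘ₗ P₁ = P₁) (h₂ : P₂ ∘ₗ P₂ = P₂)
    (c : ℝ)
    (htight : (LinearMap.adjoint P₁) ∘ₗ P₁ + (LinearMap.adjoint P₂) ∘ₗ P₂ =
      ((c : ℝ) : 𝕜) • LinearMap.id)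
    (hne : Module.finrank 𝕜 (LinearMap.range P₁) ≠
        Module.finrank 𝕜 (LinearMap.range P₂)) :
    c = 1 ∧ LinearMap.adjoint P₁ = P₁ ∧ LinearMap.adjoint P₂ = P₂ := by
  obtain rfl := eq_one_of_finrank_range_ne h₁ h₂ htight hne
  have hid : adjoint P₁ ∘ₗ P₁ + adjoint P₂ ∘ₗ P₂ = LinearMap.id := by simpa using htight
  exact ⟨rfl, adjoint_eq_self_of_adjoint_comp_add_eq_id h₁ hid,
    adjoint_eq_self_of_adjoint_comp_add_eq_id h₂ (add_comm (adjoint P₁ ∘ₗ P₁) _ ▸ hid)⟩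

theorem stmt_15 {𝕜 E : Type*} [RCLike 𝕜] [NormedAddCommGroup E]
    [InnerProductSpace 𝕜 E] [FiniteDimensional 𝕜 E]
    (P₁ P₂ : E →ₗ[𝕜] E) (h₁ : P₁ ∘ₗ P₁ = P₁) (h₂ : P₂ ∘ₗ P₂ = P₂)
    (c : ℝ) (hc : 0 < c)
    (htight : (LinearMap.adjoint P₁) ∘ₗ P₁ + (LinearMap.adjoint P₂) ∘ₗ P₂ =
      ((c : ℝ) : 𝕜) • LinearMap.id)
    (hrank : Module.finrank 𝕜 (LinearMap.range P₁) +
        Module.finrank 𝕜 (LinearMap.range P₂) = Module.finrank 𝕜 E)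
    (hne : Module.finrank 𝕜 (LinearMap.range P₁) ≠
        Module.finrank 𝕜 (LinearMap.range P₂)) :
    c = 1 ∧ LinearMap.adjoint P₁ = P₁ ∧ LinearMap.adjoint P₂ = P₂ :=
  stmt_15_general P₁ P₂ h₁ h₂ c htight hne
end
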